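/- For every real α with 0 < α ≤ 1, the infimum of 2(a+b+c+f)+(d+e) over all general configurations (a,b,c,d,e,f) for α equals the minimum of the following two quantities: (i) the infimum of 2(a+b+c)+d over all kissing-rectangles configurations (a,b,c,d) for α, and (ii) the infimum of a+b+2(c+d) over all embedded-rectangle configurations (a,b,c,d) for α. -/

import Mathlib

/-- A general configuration for `α` (Figure 3 of the paper): a rectangle `a × b`
together with an L-shaped region described by `c, d, e, f`, the two regions having
areas `1` and `α` in either order. -/
def IsGeneralConfig (α a b c d e f : ℝ) : Prop :=
  0 < a ∧ 0 < b ∧ 0 ≤ c ∧ 0 ≤ d ∧ 0 ≤ e ∧ 0 ≤ f ∧ d ≤ b ∧ e ≤ a ∧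
    ((a * b = 1 ∧ c * d + c * f + e * f = α) ∨
      (a * b = α ∧ c * d + c * f + e * f = 1))

/-- A kissing-rectangles configuration for `α`. -/
def IsKissingConfig (α a b c d : ℝ) : Prop :=
  0 < a ∧ 0 < b ∧ 0 < c ∧ 0 < d ∧ d ≤ b ∧
    ((a * b = 1 ∧ c * d = α) ∨ (a * b = α ∧ c * d = 1))

/-- An embedded-rectangle configuration for `α`. -/
def IsEmbeddedConfig (α a b c d : ℝ) : Prop :=
  0 < a ∧ 0 < b ∧ 0 < c ∧ 0 < d ∧ a ≤ c ∧ b ≤ d ∧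
    c * d = 1 + α ∧ (a * b = α ∨ a * b = 1)

/-!
The L-shaped region of a general configuration is a column of width `c` and height `d + f`
beside the `a × b` rectangle together with a strip of width `e` and height `f` under it. For fixed
`c` and `e`, its area `c * d + (c + e) * f` and the perimeter term `d + 2 * f` are both linear in
`(d, f)`, so the perimeter does not increase when `d` is pushed down to `0` (if `c < e`) or up
(if `e ≤ c`) at constant area. Pushing down leaves a single `(c + e) × f` rectangle against
`a × b`, i.e. kissing rectangles. Pushing up ends either with `f = 0` (kissing rectangles) or at
`d = b`. There a strip of height `F < b` is absorbed into the column; otherwise the column is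
moved into the strip, which ends with the strip as wide as `a` (an embedded rectangle) or with
the column gone (kissing rectangles). Conversely, kissing and embedded configurations are
degenerate general ones (`e = f = 0`, resp. `d = b` and `e = a`).
-/

def KissingWithin (p q P : ℝ) : Prop :=
  ∃ x y u v : ℝ, 0 < x ∧ 0 < y ∧ 0 < u ∧ 0 < v ∧ v ≤ y ∧ x * y = p ∧ u * v = q ∧
    2 * (x + y + u) + v ≤ P

def EmbeddedWithin (p q P : ℝ) : Prop :=
  ∃ x y u v : ℝ, 0 < x ∧ 0 < y ∧ x ≤ u ∧ y ≤ v ∧ x * y = p ∧ u * v = p + q ∧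
    x + y + 2 * (u + v) ≤ P

def SpecialWithin (p q P : ℝ) : Prop :=
  KissingWithin p q P ∨ KissingWithin q p P ∨ EmbeddedWithin p q P

section Monotone

variable {p q P Q : ℝ}

theorem KissingWithin.mono (h : KissingWithin p q P) (hPQ : P ≤ Q) : KissingWithin p q Q :=
  let ⟨x, y, u, v, hx, hy, hu, hv, hvy, hxy, huv, hP⟩ := h
  ⟨x, y, u, v, hx, hy, hu, hv, hvy, hxy, huv, hP.trans hPQ⟩

theorem EmbeddedWithin.mono (h : EmbeddedWithin p q P) (hPQ : P ≤ Q) : EmbeddedWithin p q Q :=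
  let ⟨x, y, u, v, hx, hy, hxu, hyv, hxy, huv, hP⟩ := h
  ⟨x, y, u, v, hx, hy, hxu, hyv, hxy, huv, hP.trans hPQ⟩

theorem SpecialWithin.mono (h : SpecialWithin p q P) (hPQ : P ≤ Q) : SpecialWithin p q Q :=
  h.imp (·.mono hPQ) (Or.imp (·.mono hPQ) (·.mono hPQ))

end Monotone

section ColumnAndStrip

variable {a b c e F : ℝ}

theorem kissingWithin_merge_strip_into_column (ha : 0 < a) (hb : 0 < b) (hc : 0 < c)
    (he : 0 ≤ e) (hF : 0 < F) (hFb : F < b) :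
    KissingWithin (c * (b + F) + e * F) (a * b) (2 * (a + b + c + F) + (b + e)) := by
  have hbF : 0 < b + F := by linarith
  have hstrip : 2 * (e * F / (b + F)) ≤ e := by
    rw [← mul_div_assoc, div_le_iff₀ hbF]
    nlinarith
  refine ⟨c + e * F / (b + F), b + F, a, b, by positivity, hbF, ha, hb, by linarith, ?_, rfl,
    by linarith⟩
  field_simp

theorem kissingWithin_merge_column_into_strip (ha : 0 < a) (hb : 0 < b) (hc : 0 < c)
    (he : 0 ≤ e) (hbF : b ≤ F) (hlt : c * (b + F) < F * (a - e)) :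
    KissingWithin (a * b) (c * (b + F) + e * F) (2 * (a + b + c + F) + (b + e)) := by
  have hF : 0 < F := hb.trans_le hbF
  have hcolumn : c * (b + F) / F ≤ 2 * c := by
    rw [div_le_iff₀ hF]
    nlinarith
  have hEa : c * (b + F) / F < a - e := by
    rw [div_lt_iff₀ hF]
    linarith
  refine ⟨b, a, F, e + c * (b + F) / F, hb, ha, hF, by positivity, by linarith, mul_comm _ _,
    ?_, by linarith⟩
  field_simp
  ring

theorem embeddedWithin_fill_strip (ha : 0 < a) (hb : 0 < b) (hea : e ≤ a) (hbF : b ≤ F)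
    (hle : F * (a - e) ≤ c * (b + F)) :
    EmbeddedWithin (a * b) (c * (b + F) + e * F) (2 * (a + b + c + F) + (b + e)) := by
  have hbF' : 0 < b + F := by linarith
  have hC : F * (a - e) / (b + F) ≤ c := by rwa [div_le_iff₀ hbF']
  have hshrink : a - e ≤ 2 * (F * (a - e) / (b + F)) := by
    rw [← mul_div_assoc, le_div_iff₀ hbF']
    nlinarith [mul_nonneg (sub_nonneg.2 hea) (sub_nonneg.2 hbF)]
  refine ⟨a, b, a + (c - F * (a - e) / (b + F)), b + F, ha, hb, by linarith, by linarith, rfl,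
    ?_, by linarith⟩
  field_simp
  ring

theorem specialWithin_column_strip (ha : 0 < a) (hb : 0 < b) (hc : 0 < c) (he : 0 ≤ e)
    (hea : e ≤ a) (hF : 0 < F) :
    SpecialWithin (a * b) (c * (b + F) + e * F) (2 * (a + b + c + F) + (b + e)) := by
  rcases lt_or_ge F b with hFb | hbF
  · exact .inr <| .inl <| kissingWithin_merge_strip_into_column ha hb hc he hF hFb
  rcases lt_or_ge (c * (b + F)) (F * (a - e)) with hlt | hle
  · exact .inl <| kissingWithin_merge_column_into_strip ha hb hc he hbF hlt
  · exact .inr <| .inr <| embeddedWithin_fill_strip ha hb hea hbF hle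

end ColumnAndStrip

section Reduction

variable {a b c d e f F : ℝ}

theorem specialWithin_stacked (ha : 0 < a) (hb : 0 < b) (hc : 0 ≤ c) (hea : e ≤ a)
    (hce : 0 < c + e) (hF : 0 < F) :
    SpecialWithin (a * b) ((c + e) * F) (2 * (a + b + c + F) + e) := by
  rcases le_or_gt (c + e) a with hwa | haw
  · exact .inl ⟨b, a, F, c + e, hb, ha, hF, hce, hwa, mul_comm _ _, mul_comm _ _, by linarith⟩
  · exact .inr <| .inl ⟨F, c + e, b, a, hF, hce, hb, ha, haw.le, mul_comm _ _, mul_comm _ _,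
      by linarith⟩

theorem specialWithin_of_general_of_lt (ha : 0 < a) (hb : 0 < b) (hc : 0 ≤ c) (hd : 0 ≤ d)
    (hea : e ≤ a) (hce : c < e) (hS : 0 < c * d + c * f + e * f) :
    SpecialWithin (a * b) (c * d + c * f + e * f) (2 * (a + b + c + f) + (d + e)) := by
  have hce' : 0 < c + e := by linarith
  set F := (c * d + c * f + e * f) / (c + e)
  have hSF : (c + e) * F = c * d + c * f + e * f := mul_div_cancel₀ _ hce'.ne'
  have hFd : 2 * F ≤ 2 * f + d :=
    le_of_mul_le_mul_left (by nlinarith [mul_le_mul_of_nonneg_right hce.le hd]) hce'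
  have h := specialWithin_stacked ha hb hc hea hce' (div_pos hS hce')
  rw [hSF] at h
  exact h.mono (by linarith)

theorem specialWithin_of_general_of_le (ha : 0 < a) (hb : 0 < b) (hc : 0 < c) (he : 0 ≤ e)
    (hf : 0 ≤ f) (hdb : d ≤ b) (hea : e ≤ a) (hec : e ≤ c)
    (hS : 0 < c * d + c * f + e * f) :
    SpecialWithin (a * b) (c * d + c * f + e * f) (2 * (a + b + c + f) + (d + e)) := by
  set S := c * d + c * f + e * f
  rcases le_or_gt (S / c) b with hSb | hbS
  · have hSc : S / c ≤ d + 2 * f := by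
      rw [div_le_iff₀ hc]
      nlinarith [mul_le_mul_of_nonneg_right hec hf]
    exact .inl ⟨a, b, c, S / c, ha, hb, hc, div_pos hS hc, hSb, rfl, mul_div_cancel₀ _ hc.ne',
      by linarith⟩
  have hce : 0 < c + e := by linarith
  set F := (S - c * b) / (c + e)
  have hSF : (c + e) * F = S - c * b := mul_div_cancel₀ _ hce.ne'
  have hF : 0 < F := div_pos (by rw [lt_div_iff₀ hc] at hbS; linarith) hce
  have hFd : 2 * F + b ≤ 2 * f + d :=
    le_of_mul_le_mul_left
      (by nlinarith [mul_nonneg (sub_nonneg.2 hec) (sub_nonneg.2 hdb)]) hce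
  have h := specialWithin_column_strip ha hb hc he hea hF
  rw [show c * (b + F) + e * F = S by linear_combination hSF] at h
  exact h.mono (by linarith)

theorem specialWithin_of_general (ha : 0 < a) (hb : 0 < b) (hc : 0 ≤ c) (hd : 0 ≤ d)
    (he : 0 ≤ e) (hf : 0 ≤ f) (hdb : d ≤ b) (hea : e ≤ a) (hS : 0 < c * d + c * f + e * f) :
    SpecialWithin (a * b) (c * d + c * f + e * f) (2 * (a + b + c + f) + (d + e)) := by
  rcases lt_or_ge c e with hce | hec
  · exact specialWithin_of_general_of_lt ha hb hc hd hea hce hS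
  · have hc0 : 0 < c := hc.lt_of_ne <| by
      rintro rfl
      obtain rfl : e = 0 := by linarith
      simp at hS
    exact specialWithin_of_general_of_le ha hb hc0 he hf hdb hea hec hS

end Reduction

def IsAreaPair (α p q : ℝ) : Prop :=
  (p = 1 ∧ q = α) ∨ (p = α ∧ q = 1)

theorem IsAreaPair.symm {α p q : ℝ} (h : IsAreaPair α p q) : IsAreaPair α q p :=
  Or.imp And.symm And.symm (Or.symm h)

def generalPerimeters (α : ℝ) : Set ℝ :=
  {p | ∃ a b c d e f : ℝ, IsGeneralConfig α a b c d e f ∧ p = 2 * (a + b + c + f) + (d + e)}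

def kissingPerimeters (α : ℝ) : Set ℝ :=
  {p | ∃ a b c d : ℝ, IsKissingConfig α a b c d ∧ p = 2 * (a + b + c) + d}

def embeddedPerimeters (α : ℝ) : Set ℝ :=
  {p | ∃ a b c d : ℝ, IsEmbeddedConfig α a b c d ∧ p = a + b + 2 * (c + d)}

section Perimeters

variable {α p q P : ℝ}

theorem KissingWithin.exists_mem_kissingPerimeters (h : KissingWithin p q P)
    (hpq : IsAreaPair α p q) : ∃ k ∈ kissingPerimeters α, k ≤ P := by
  obtain ⟨x, y, u, v, hx, hy, hu, hv, hvy, rfl, rfl, hP⟩ := h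
  exact ⟨_, ⟨x, y, u, v, ⟨hx, hy, hu, hv, hvy, hpq⟩, rfl⟩, hP⟩

theorem EmbeddedWithin.exists_mem_embeddedPerimeters (h : EmbeddedWithin p q P)
    (hpq : IsAreaPair α p q) : ∃ k ∈ embeddedPerimeters α, k ≤ P := by
  obtain ⟨x, y, u, v, hx, hy, hxu, hyv, hxy, huv, hP⟩ := h
  refine ⟨_, ⟨x, y, u, v,
    ⟨hx, hy, hx.trans_le hxu, hy.trans_le hyv, hxu, hyv, ?_, ?_⟩, rfl⟩, hP⟩
  · rcases hpq with ⟨rfl, rfl⟩ | ⟨rfl, rfl⟩ <;> linarith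
  · rcases hpq with ⟨rfl, -⟩ | ⟨rfl, -⟩
    exacts [.inr hxy, .inl hxy]

theorem SpecialWithin.exists_mem_union (h : SpecialWithin p q P) (hpq : IsAreaPair α p q) :
    ∃ k ∈ kissingPerimeters α ∪ embeddedPerimeters α, k ≤ P := by
  rcases h with h | h | h
  · obtain ⟨k, hk, hkP⟩ := h.exists_mem_kissingPerimeters hpq
    exact ⟨k, .inl hk, hkP⟩
  · obtain ⟨k, hk, hkP⟩ := h.exists_mem_kissingPerimeters hpq.symm
    exact ⟨k, .inl hk, hkP⟩
  · obtain ⟨k, hk, hkP⟩ := h.exists_mem_embeddedPerimeters hpq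
    exact ⟨k, .inr hk, hkP⟩

theorem exists_le_of_mem_generalPerimeters (hα : 0 < α) (hP : P ∈ generalPerimeters α) :
    ∃ k ∈ kissingPerimeters α ∪ embeddedPerimeters α, k ≤ P := by
  obtain ⟨a, b, c, d, e, f, ⟨ha, hb, hc, hd, he, hf, hdb, hea, hpq⟩, rfl⟩ := hP
  have hS : 0 < c * d + c * f + e * f := by
    rcases hpq with ⟨-, h⟩ | ⟨-, h⟩ <;> rw [h] <;> linarith
  exact (specialWithin_of_general ha hb hc hd he hf hdb hea hS).exists_mem_union hpq

theorem kissingPerimeters_subset_generalPerimeters :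
    kissingPerimeters α ⊆ generalPerimeters α := by
  rintro _ ⟨a, b, c, d, ⟨ha, hb, hc, hd, hdb, hpq⟩, rfl⟩
  exact ⟨a, b, c, d, 0, 0,
    ⟨ha, hb, hc.le, hd.le, le_rfl, le_rfl, hdb, ha.le, by simpa using hpq⟩, by ring⟩

theorem embeddedPerimeters_subset_generalPerimeters :
    embeddedPerimeters α ⊆ generalPerimeters α := by
  rintro _ ⟨a, b, c, d, ⟨ha, hb, hc, hd, hac, hbd, hcd, hab⟩, rfl⟩
  refine ⟨a, b, c - a, b, a, d - b, ⟨ha, hb, by linarith, hb.le, ha.le, by linarith, le_rfl,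
    le_rfl, ?_⟩, by ring⟩
  have hS : (c - a) * b + (c - a) * (d - b) + a * (d - b) = c * d - a * b := by ring
  rw [hS, hcd]
  rcases hab with h | h <;> rw [h]
  exacts [.inr ⟨rfl, by ring⟩, .inl ⟨rfl, by ring⟩]

theorem kissingPerimeters_nonempty (hα : 0 < α) : (kissingPerimeters α).Nonempty :=
  ⟨_, 1, 1, α, 1, ⟨one_pos, one_pos, hα, one_pos, le_rfl, .inl ⟨mul_one 1, mul_one α⟩⟩,
    rfl⟩

theorem embeddedPerimeters_nonempty (hα : 0 < α) : (embeddedPerimeters α).Nonempty :=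
  ⟨_, 1, 1, 1 + α, 1, ⟨one_pos, one_pos, by linarith, one_pos, by linarith, le_rfl, mul_one _,
    .inr (mul_one 1)⟩, rfl⟩

theorem kissingPerimeters_bddBelow : BddBelow (kissingPerimeters α) :=
  ⟨0, by rintro _ ⟨a, b, c, d, ⟨ha, hb, hc, hd, -⟩, rfl⟩; positivity⟩

theorem embeddedPerimeters_bddBelow : BddBelow (embeddedPerimeters α) :=
  ⟨0, by rintro _ ⟨a, b, c, d, ⟨ha, hb, hc, hd, -⟩, rfl⟩; positivity⟩

end Perimeters

theorem general_case_min_eq_min_special (α : ℝ) (h0 : 0 < α) :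
    sInf {p : ℝ | ∃ a b c d e f : ℝ, IsGeneralConfig α a b c d e f ∧
        p = 2 * (a + b + c + f) + (d + e)} =
      min
        (sInf {p : ℝ | ∃ a b c d : ℝ, IsKissingConfig α a b c d ∧
          p = 2 * (a + b + c) + d})
        (sInf {p : ℝ | ∃ a b c d : ℝ, IsEmbeddedConfig α a b c d ∧
          p = a + b + 2 * (c + d)}) := by
  change sInf (generalPerimeters α) =
    min (sInf (kissingPerimeters α)) (sInf (embeddedPerimeters α))
  rw [← csInf_union kissingPerimeters_bddBelow (kissingPerimeters_nonempty h0)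
    embeddedPerimeters_bddBelow (embeddedPerimeters_nonempty h0)]
  refine csInf_eq_csInf_of_forall_exists_le (fun _ ↦ exists_le_of_mem_generalPerimeters h0) ?_
  rintro p hp
  exact ⟨p, Set.union_subset kissingPerimeters_subset_generalPerimeters
    embeddedPerimeters_subset_generalPerimeters hp, le_rfl⟩
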